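/- arXiv:2407.00164 — 3 statements merged into one kernel-verified Lean document; each statement's English description precedes it below -/
import Mathlib

section
/- Conversely, any triple (a_x, a_y, a_z) of nonnegative reals satisfying −a_x^2 + a_y^2 + a_z^2 ≥ 0, a_x^2 − a_y^2 + a_z^2 ≥ 0, a_x^2 + a_y^2 − a_z^2 ≥ 0, and a_x^2 + a_y^2 + a_z^2 ≤ 2 is realized by some Bloch vector (r_x, r_y, r_z) with r_x^2 + r_y^2 + r_z^2 ≤ 1, i.e., a_x = sqrt(r_y^2 + r_z^2), a_y = sqrt(r_x^2 + r_z^2), a_z = sqrt(r_x^2 + r_y^2). -/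
theorem stmt_6 (ax ay az : ℝ) (hax : 0 ≤ ax) (hay : 0 ≤ ay) (haz : 0 ≤ az)
    (h1 : -ax^2 + ay^2 + az^2 ≥ 0) (h2 : ax^2 - ay^2 + az^2 ≥ 0)
    (h3 : ax^2 + ay^2 - az^2 ≥ 0) (h4 : ax^2 + ay^2 + az^2 ≤ 2) :
    ∃ rx ry rz : ℝ, rx^2 + ry^2 + rz^2 ≤ 1 ∧
      ax = Real.sqrt (ry^2 + rz^2) ∧ ay = Real.sqrt (rx^2 + rz^2) ∧
      az = Real.sqrt (rx^2 + ry^2) := by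
  refine ⟨Real.sqrt ((-ax^2 + ay^2 + az^2)/2), Real.sqrt ((ax^2 - ay^2 + az^2)/2),
    Real.sqrt ((ax^2 + ay^2 - az^2)/2), ?_, ?_, ?_, ?_⟩ <;>
  rw [Real.sq_sqrt (by linarith), Real.sq_sqrt (by linarith)]
  · rw [Real.sq_sqrt (by linarith)]; linarith
  · rw [show (ax^2 - ay^2 + az^2)/2 + (ax^2 + ay^2 - az^2)/2 = ax^2 by ring,
      Real.sqrt_sq hax]
  · rw [show (-ax^2 + ay^2 + az^2)/2 + (ax^2 + ay^2 - az^2)/2 = ay^2 by ring,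
      Real.sqrt_sq hay]
  · rw [show (-ax^2 + ay^2 + az^2)/2 + (ax^2 - ay^2 + az^2)/2 = az^2 by ring,
      Real.sqrt_sq haz]
end

section
/- For an impure Bloch vector (r_x^2 + r_y^2 + r_z^2 = r^2 with 0 ≤ r < 1), the B-monotones satisfy 1/(1 − B_x^2) + 1/(1 − B_y^2) + 1/(1 − B_z^2) = (3 − r^2)/(1 − r^2). -/
theorem stmt_11 (r rx ry rz : ℝ) (hr0 : 0 ≤ r) (hr1 : r < 1)
    (hrad : rx^2 + ry^2 + rz^2 = r^2) :
    1 / (1 - (Real.sqrt ((ry^2 + rz^2) / (1 - rx^2)))^2) +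
    1 / (1 - (Real.sqrt ((rx^2 + rz^2) / (1 - ry^2)))^2) +
    1 / (1 - (Real.sqrt ((rx^2 + ry^2) / (1 - rz^2)))^2) = (3 - r^2) / (1 - r^2) := by
  have hr2 : r^2 < 1 := by nlinarith
  have hx : rx^2 < 1 := by nlinarith [sq_nonneg ry, sq_nonneg rz]
  have hy : ry^2 < 1 := by nlinarith [sq_nonneg rx, sq_nonneg rz]
  have hz : rz^2 < 1 := by nlinarith [sq_nonneg rx, sq_nonneg ry]
  rw [Real.sq_sqrt (by have := sub_pos.mpr hx; positivity : (0:ℝ) ≤ (ry^2 + rz^2) / (1 - rx^2)),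
      Real.sq_sqrt (by have := sub_pos.mpr hy; positivity : (0:ℝ) ≤ (rx^2 + rz^2) / (1 - ry^2)),
      Real.sq_sqrt (by have := sub_pos.mpr hz; positivity : (0:ℝ) ≤ (rx^2 + ry^2) / (1 - rz^2))]
  have hxne : (1 - rx^2) ≠ 0 := by nlinarith
  have hyne : (1 - ry^2) ≠ 0 := by nlinarith
  have hzne : (1 - rz^2) ≠ 0 := by nlinarith
  have hrne : (1 - r^2) ≠ 0 := by nlinarith
  have e1 : 1 - (ry^2 + rz^2) / (1 - rx^2) = (1 - r^2) / (1 - rx^2) := by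
    field_simp; nlinarith
  have e2 : 1 - (rx^2 + rz^2) / (1 - ry^2) = (1 - r^2) / (1 - ry^2) := by
    field_simp; nlinarith
  have e3 : 1 - (rx^2 + ry^2) / (1 - rz^2) = (1 - r^2) / (1 - rz^2) := by
    field_simp; nlinarith
  rw [e1, e2, e3, one_div_div, one_div_div, one_div_div]
  field_simp
  nlinarith
end

section
/- For an impure Bloch vector (r^2 := r_x^2 + r_y^2 + r_z^2 < 1), the B-monotones satisfy the three inequalities: −B_x^2 + B_y^2 + B_z^2 − 2 B_y^2 B_z^2 + B_x^2 B_y^2 B_z^2 ≥ 0, B_x^2 − B_y^2 + B_z^2 − 2 B_z^2 B_x^2 + B_x^2 B_y^2 B_z^2 ≥ 0, and B_x^2 + B_y^2 − B_z^2 − 2 B_x^2 B_y^2 + B_x^2 B_y^2 B_z^2 ≥ 0. -/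
lemma aux_key (a b c : ℝ) (ha : 0 ≤ a) (hb : 0 ≤ b) (hc : 0 ≤ c)
    (hs : a + b + c < 1) :
    0 ≤ -(b+c)*(1-b)*(1-c) + (a+c)*(1-a)*(1-c) + (a+b)*(1-a)*(1-b)
      - 2*(a+c)*(a+b)*(1-a) + (b+c)*(a+c)*(a+b) := by
  have h : -(b+c)*(1-b)*(1-c) + (a+c)*(1-a)*(1-c) + (a+b)*(1-a)*(1-b)
      - 2*(a+c)*(a+b)*(1-a) + (b+c)*(a+c)*(a+b) = 2*a*(1-a-b-c)^2 := by ring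
  rw [h]; positivity

theorem stmt_13 (rx ry rz : ℝ) (hball : rx^2 + ry^2 + rz^2 < 1) :
    let Bx := Real.sqrt ((ry^2 + rz^2) / (1 - rx^2))
    let By := Real.sqrt ((rx^2 + rz^2) / (1 - ry^2))
    let Bz := Real.sqrt ((rx^2 + ry^2) / (1 - rz^2))
    (-Bx^2 + By^2 + Bz^2 - 2 * By^2 * Bz^2 + Bx^2 * By^2 * Bz^2 ≥ 0) ∧
    (Bx^2 - By^2 + Bz^2 - 2 * Bz^2 * Bx^2 + Bx^2 * By^2 * Bz^2 ≥ 0) ∧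
    (Bx^2 + By^2 - Bz^2 - 2 * Bx^2 * By^2 + Bx^2 * By^2 * Bz^2 ≥ 0) := by
  intro Bx By Bz
  set a := rx^2 with ha'
  set b := ry^2 with hb'
  set c := rz^2 with hc'
  have ha : 0 ≤ a := sq_nonneg rx
  have hb : 0 ≤ b := sq_nonneg ry
  have hc : 0 ≤ c := sq_nonneg rz
  have hda : 0 < 1 - a := by nlinarith
  have hdb : 0 < 1 - b := by nlinarith
  have hdc : 0 < 1 - c := by nlinarith
  have hBx : Bx^2 = (b+c)/(1-a) := by
    show (Real.sqrt _)^2 = _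
    rw [Real.sq_sqrt (by positivity)]
  have hBy : By^2 = (a+c)/(1-b) := by
    show (Real.sqrt _)^2 = _
    rw [Real.sq_sqrt (by positivity)]
  have hBz : Bz^2 = (a+b)/(1-c) := by
    show (Real.sqrt _)^2 = _
    rw [Real.sq_sqrt (by positivity)]
  rw [hBx, hBy, hBz]
  refine ⟨?_, ?_, ?_⟩
  · have key := aux_key a b c ha hb hc hball
    rw [ge_iff_le, show -((b+c)/(1-a)) + (a+c)/(1-b) + (a+b)/(1-c)
        - 2*((a+c)/(1-b))*((a+b)/(1-c)) + (b+c)/(1-a)*((a+c)/(1-b))*((a+b)/(1-c))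
      = (-(b+c)*(1-b)*(1-c) + (a+c)*(1-a)*(1-c) + (a+b)*(1-a)*(1-b)
        - 2*(a+c)*(a+b)*(1-a) + (b+c)*(a+c)*(a+b)) / ((1-a)*(1-b)*(1-c)) from by
        field_simp]
    positivity
  · have key := aux_key b a c hb ha hc (by linarith)
    rw [ge_iff_le, show (b+c)/(1-a) - (a+c)/(1-b) + (a+b)/(1-c)
        - 2*((a+b)/(1-c))*((b+c)/(1-a)) + (b+c)/(1-a)*((a+c)/(1-b))*((a+b)/(1-c))
      = (-(a+c)*(1-a)*(1-c) + (b+c)*(1-b)*(1-c) + (b+a)*(1-b)*(1-a)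
        - 2*(b+c)*(b+a)*(1-b) + (a+c)*(b+c)*(b+a)) / ((1-b)*(1-a)*(1-c)) from by
        field_simp; ring]
    positivity
  · have key := aux_key c a b hc ha hb (by linarith)
    rw [ge_iff_le, show (b+c)/(1-a) + (a+c)/(1-b) - (a+b)/(1-c)
        - 2*((b+c)/(1-a))*((a+c)/(1-b)) + (b+c)/(1-a)*((a+c)/(1-b))*((a+b)/(1-c))
      = (-(a+b)*(1-a)*(1-b) + (c+b)*(1-c)*(1-b) + (c+a)*(1-c)*(1-a)
        - 2*(c+b)*(c+a)*(1-c) + (a+b)*(c+b)*(c+a)) / ((1-c)*(1-a)*(1-b)) from by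
        field_simp; ring]
    positivity
end
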